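/- In the rack homology of the three-colour rack T, the cycle C = -(012)-(202)-(122)+(121)+(102)+(110)-(021)-(101)-(211)+(212)+(201)+(220) represents an element of order exactly 3 in H_3(BT); in particular C is not a boundary but 3C is a boundary. -/

import Mathlib

/-!
`∂C = 0` and `∂D = 3C`, for an explicit 4-chain `D`, are direct computations. `C` is not a
boundary because Mochizuki's 3-cocycle of the dihedral quandle `R₃` vanishes on all boundaries
but takes the value `2 ≠ 0` on `C`.
-/

/-- The three-colour rack operation on `T = ZMod 3`: `a ^ b := 2*b - a`. -/
def triOp (a b : ZMod 3) : ZMod 3 := 2 * b - a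

/-- Face maps of the rack space of the three-colour rack: `∂_i^0` deletes the
`i`-th coordinate; `∂_i^1` acts by `x_i` on all earlier coordinates and then
deletes the `i`-th coordinate. -/
def triFace (ε : Bool) {n : ℕ} (i : Fin (n + 1)) (x : Fin (n + 1) → ZMod 3) :
    Fin n → ZMod 3 :=
  Fin.removeNth i (fun j => if ε = true ∧ j < i then triOp (x j) (x i) else x j)

/-- Boundary of a single `(n+1)`-cube: `∂ x = Σ_{i} (-1)^i (∂_i^0 x - ∂_i^1 x)`. -/
noncomputable def triBnd {n : ℕ} (x : Fin (n + 1) → ZMod 3) : (Fin n → ZMod 3) →₀ ℤ :=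
  ∑ i : Fin (n + 1), (-1 : ℤ) ^ ((i : ℕ) + 1) •
    (Finsupp.single (triFace false i x) 1 - Finsupp.single (triFace true i x) 1)

/-- The boundary map of the rack chain complex of the three-colour rack,
from degree `n+1` to degree `n`. -/
noncomputable def triBoundary (n : ℕ) :
    ((Fin (n + 1) → ZMod 3) →₀ ℤ) →ₗ[ℤ] ((Fin n → ZMod 3) →₀ ℤ) :=
  Finsupp.lift _ ℤ _ triBnd

/-- The generator of the degree-3 chain group given by the 3-cube `(a,b,c)`. -/
noncomputable def g (a b c : ZMod 3) : (Fin 3 → ZMod 3) →₀ ℤ := Finsupp.single ![a, b, c] 1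

/-- The chain `C` coming from the diagram of the 2-twist-spun trefoil. -/
noncomputable def C : (Fin 3 → ZMod 3) →₀ ℤ :=
  -g 0 1 2 - g 2 0 2 - g 1 2 2 + g 1 2 1 + g 1 0 2 + g 1 1 0
    - g 0 2 1 - g 1 0 1 - g 2 1 1 + g 2 1 2 + g 2 0 1 + g 2 2 0

open Finsupp

lemma triBoundary_single {n : ℕ} (x : Fin (n + 1) → ZMod 3) (r : ℤ) :
    triBoundary n (single x r) = r • triBnd x := by
  simp [triBoundary]

/-- The face `i = 0` cancels: `∂₀⁰` and `∂₀¹` agree, since nothing precedes the first entry. -/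
lemma triBnd_three (a b c : ZMod 3) : triBnd ![a, b, c] =
    single ![a, c] 1 - single ![triOp a b, c] 1
      + (single ![triOp a c, triOp b c] 1 - single ![a, b] 1) := by
  simp [triBnd, Fin.sum_univ_succ, triFace]
  congr! 4 <;> funext j <;> fin_cases j <;> rfl

lemma triBnd_four (a b c d : ZMod 3) : triBnd ![a, b, c, d] =
    single ![a, c, d] 1 - single ![triOp a b, c, d] 1
      + (single ![triOp a c, triOp b c, d] 1 - single ![a, b, d] 1
        + (single ![a, b, c] 1 - single ![triOp a d, triOp b d, triOp c d] 1)) := by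
  simp [triBnd, Fin.sum_univ_succ, triFace]
  congr! 4 <;> funext j <;> fin_cases j <;> rfl

lemma range_triBoundary_le_ker_linearCombination {M : Type*} [AddCommGroup M] {n : ℕ}
    (f : (Fin n → ZMod 3) → M) (hf : ∀ x, linearCombination ℤ f (triBnd x) = 0) :
    LinearMap.range (triBoundary n) ≤ LinearMap.ker (linearCombination ℤ f) := by
  refine LinearMap.range_le_ker_iff.2 (lhom_ext fun x r => ?_)
  simp [triBoundary_single, hf]

/-- Mochizuki's 3-cocycle `(x - y) ((2z - y)^p + y^p - 2z^p) / p` of the dihedral quandle `R_p`;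
for `p = 3` the quotient is `2z (z - y)^2`. -/
def mochizukiCocycle (v : Fin 3 → ZMod 3) : ZMod 3 := (v 0 - v 1) * 2 * v 2 * (v 2 - v 1) ^ 2

lemma linearCombination_mochizukiCocycle_triBnd (x : Fin 4 → ZMod 3) :
    linearCombination ℤ mochizukiCocycle (triBnd x) = 0 := by
  obtain ⟨a, b, c, d, rfl⟩ : ∃ a b c d, x = ![a, b, c, d] :=
    ⟨x 0, x 1, x 2, x 3, by funext j; fin_cases j <;> rfl⟩
  simp only [triBnd_four, map_add, map_sub, linearCombination_single, one_smul, mochizukiCocycle]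
  revert a b c d
  decide

lemma linearCombination_mochizukiCocycle_C : linearCombination ℤ mochizukiCocycle C = 2 := by
  simp only [C, g, map_add, map_sub, map_neg, linearCombination_single, one_smul, mochizukiCocycle]
  decide

lemma triBoundary_C : triBoundary 2 C = 0 := by
  simp only [C, g, map_add, map_sub, map_neg, triBoundary_single, one_smul, triBnd_three, triOp]
  reduce_mod_char
  abel

noncomputable def fillingOfThreeC : (Fin 4 → ZMod 3) →₀ ℤ :=
  single ![0, 0, 0, 1] 6 + single ![0, 0, 1, 0] 5 + single ![0, 0, 1, 2] (-5)
    + single ![0, 1, 0, 0] (-1) + single ![0, 1, 0, 1] (-2) + single ![0, 1, 0, 2] 3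
    + single ![0, 1, 1, 0] (-6) + single ![0, 1, 1, 1] 3 + single ![0, 1, 1, 2] 1
    + single ![0, 1, 2, 0] 2 + single ![0, 1, 2, 2] (-13) + single ![0, 2, 0, 2] (-3)
    + single ![0, 2, 1, 2] 1 + single ![0, 2, 2, 2] 2 + single ![1, 0, 1, 0] 1
    + single ![1, 0, 1, 2] (-1) + single ![1, 1, 0, 2] (-2) + single ![2, 0, 1, 0] 1

lemma triBoundary_fillingOfThreeC : triBoundary 3 fillingOfThreeC = (3 : ℤ) • C := by
  simp only [fillingOfThreeC, C, g, map_add, triBoundary_single, triBnd_four, triOp]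
  reduce_mod_char
  abel

/-- The cycle `C` represents an element of order exactly 3 in `H₃(BT)`:
it is a cycle, it is not a boundary, but `3 C` is a boundary. -/
theorem C_order_three :
    triBoundary 2 C = 0 ∧
    C ∉ LinearMap.range (triBoundary 3) ∧
    (3 : ℤ) • C ∈ LinearMap.range (triBoundary 3) := by
  refine ⟨triBoundary_C, fun hC => ?_, ⟨fillingOfThreeC, triBoundary_fillingOfThreeC⟩⟩
  have hC0 : linearCombination ℤ mochizukiCocycle C = 0 :=
    range_triBoundary_le_ker_linearCombination _ linearCombination_mochizukiCocycle_triBnd hC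
  rw [linearCombination_mochizukiCocycle_C] at hC0
  exact absurd hC0 (by decide)
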